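/- arXiv:1704.02591 — 4 statements merged into one kernel-verified Lean document; each statement's English description precedes it below -/
import Mathlib

section
/- For any subset X of ℂ, the space F_X of injective functions from X to ℂ, with the subspace topology inherited from the product space ℂ^X, is path connected. -/
noncomputable section

open Cardinal

/-- An enumeration of the rationals. -/
private noncomputable def rseq : ℕ → ℚ := fun n => (Denumerable.eqv ℚ).symm n

private lemma rseq_surj : Function.Surjective rseq := (Denumerable.eqv ℚ).symm.surjective

/-- Interleaving of the "rational cut" bit sequences of `r` and `s`. -/
private noncomputable def mix (r s : ℝ) : ℕ → Bool := fun n =>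
  if n % 2 = 0 then decide ((rseq (n / 2) : ℝ) < r) else decide ((rseq (n / 2) : ℝ) < s)

private lemma mix_even (r s : ℝ) (k : ℕ) :
    mix r s (2 * k) = decide ((rseq k : ℝ) < r) := by
  have h1 : 2 * k % 2 = 0 := by omega
  have h2 : 2 * k / 2 = k := by omega
  simp [mix, h1, h2]

private lemma mix_odd (r s : ℝ) (k : ℕ) :
    mix r s (2 * k + 1) = decide ((rseq k : ℝ) < s) := by
  have h1 : (2 * k + 1) % 2 = 1 := by omega
  have h2 : (2 * k + 1) / 2 = k := by omega
  simp [mix, h1, h2]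

/-- The interleaved Cantor function: injective as a function of the pair, and
strictly monotone in the second argument. -/
private noncomputable def phi (r s : ℝ) : ℝ := Cardinal.cantorFunction (1 / 3) (mix r s)

private lemma phi_inj {r s r' s' : ℝ} (h : phi r s = phi r' s') : r = r' ∧ s = s' := by
  have hm : mix r s = mix r' s' :=
    Cardinal.cantorFunction_injective (by norm_num) (by norm_num) h
  constructor
  · by_contra hne
    rcases Ne.lt_or_gt hne with hlt | hlt
    · obtain ⟨q, h1, h2⟩ := exists_rat_btwn hlt
      obtain ⟨k, rfl⟩ := rseq_surj q
      have := congrFun hm (2 * k)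
      rw [mix_even, mix_even, decide_eq_decide] at this
      exact absurd (this.2 h2) (not_lt.2 h1.le)
    · obtain ⟨q, h1, h2⟩ := exists_rat_btwn hlt
      obtain ⟨k, rfl⟩ := rseq_surj q
      have := congrFun hm (2 * k)
      rw [mix_even, mix_even, decide_eq_decide] at this
      exact absurd (this.1 h2) (not_lt.2 h1.le)
  · by_contra hne
    rcases Ne.lt_or_gt hne with hlt | hlt
    · obtain ⟨q, h1, h2⟩ := exists_rat_btwn hlt
      obtain ⟨k, rfl⟩ := rseq_surj q
      have := congrFun hm (2 * k + 1)
      rw [mix_odd, mix_odd, decide_eq_decide] at this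
      exact absurd (this.2 h2) (not_lt.2 h1.le)
    · obtain ⟨q, h1, h2⟩ := exists_rat_btwn hlt
      obtain ⟨k, rfl⟩ := rseq_surj q
      have := congrFun hm (2 * k + 1)
      rw [mix_odd, mix_odd, decide_eq_decide] at this
      exact absurd (this.1 h2) (not_lt.2 h1.le)

private lemma phi_lt (r : ℝ) {s s' : ℝ} (h : s < s') : phi r s < phi r s' := by
  classical
  -- pointwise monotonicity of the bit sequences
  have hfg : ∀ n, mix r s n = true → mix r s' n = true := by
    intro n
    rcases Nat.even_or_odd n with ⟨k, hk⟩ | ⟨k, hk⟩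
    · subst hk
      rw [show k + k = 2 * k by ring, mix_even, mix_even]
      simp only [decide_eq_true_eq]
      intro hq; exact hq
    · subst hk
      rw [mix_odd, mix_odd]
      simp only [decide_eq_true_eq]
      intro hq; exact hq.trans h
  -- the sequences differ somewhere
  obtain ⟨q, h1, h2⟩ := exists_rat_btwn h
  obtain ⟨k, rfl⟩ := rseq_surj q
  have hdiff : mix r s (2 * k + 1) ≠ mix r s' (2 * k + 1) := by
    rw [mix_odd, mix_odd]
    simp [not_lt.2 h1.le, h2]
  have hex : ∃ n, mix r s n ≠ mix r s' n := ⟨2 * k + 1, hdiff⟩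
  set n := Nat.find hex with hn
  have hspec : mix r s n ≠ mix r s' n := Nat.find_spec hex
  have hmin : ∀ m < n, mix r s m = mix r s' m := fun m hm =>
    not_not.1 (Nat.find_min hex hm)
  have hfn : mix r s n = false := by
    cases hcase : mix r s n
    · rfl
    · exact absurd (hcase.trans (hfg n hcase).symm) hspec
  have hgn : mix r s' n = true := by
    cases hcase : mix r s' n
    · rw [hfn, hcase] at hspec; exact absurd rfl hspec
    · rfl
  exact Cardinal.increasing_cantorFunction (by norm_num) (by norm_num) hmin hfn hgn

private lemma combo_lt {t bx bY gx gy : ℝ} (ht0 : 0 ≤ t) (ht1 : t ≤ 1)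
    (hb : bx < bY) (hg : gx < gy) :
    (1 - t) * bx + t * gx < (1 - t) * bY + t * gy := by
  nlinarith [mul_le_mul_of_nonneg_left hb.le (by linarith : (0:ℝ) ≤ 1 - t),
    mul_le_mul_of_nonneg_left hg.le ht0]

/-- The configuration space `F_X ⊆ ℂ^X` of injective functions `X → ℂ`,
with the subspace topology from the product topology on `ℂ^X`. -/
abbrev Config (X : Set ℂ) : Type := {u : X → ℂ // Function.Injective u}

/-- A straight-line segment between two configurations, injective at each time,
gives a path. -/
private lemma joined_segment {X : Set ℂ} (f g : Config X)
    (h : ∀ t : ℝ, 0 ≤ t → t ≤ 1 →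
      Function.Injective fun x : X => ((1 - t : ℝ) : ℂ) * f.1 x + ((t : ℝ) : ℂ) * g.1 x) :
    Joined f g := by
  refine ⟨⟨⟨fun t => ⟨fun x => ((1 - (t : ℝ) : ℝ) : ℂ) * f.1 x + (((t : ℝ) : ℝ) : ℂ) * g.1 x,
      h t t.2.1 t.2.2⟩, ?_⟩, ?_, ?_⟩⟩
  · apply Continuous.subtype_mk
    apply continuous_pi
    intro x
    fun_prop
  · ext x
    simp
  · ext x
    simp

/-- **Proposition 2.1**: for any `X ⊆ ℂ`, the space `F_X` is path connected. -/
theorem configSpace_pathConnected (X : Set ℂ) : PathConnectedSpace (Config X) := by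
  classical
  -- an injection from `ℂ` (hence from `X`) into `ℝ`
  obtain ⟨e⟩ : Nonempty (ℂ ≃ ℝ) := Cardinal.eq.1 (by rw [Cardinal.mk_real]; exact mk_complex)
  set F : X → ℝ := fun x => e (x : ℂ) with hFdef
  have hF : Function.Injective F := fun x y hxy =>
    Subtype.ext (e.injective hxy)
  have hbase : Function.Injective fun x : X => ((F x : ℝ) : ℂ) := fun x y hxy =>
    hF (Complex.ofReal_injective (by simpa using hxy))
  set base : Config X := ⟨fun x => ((F x : ℝ) : ℂ), hbase⟩ with hbasedef
  have key : ∀ u : Config X, Joined u base := by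
    intro u
    set a : X → ℝ := fun x => (u.1 x).re with ha
    set b : X → ℝ := fun x => (u.1 x).im with hb
    set G : X → ℝ := fun x => phi (a x) (b x) with hG
    have hGinj : Function.Injective G := by
      intro x y hxy
      obtain ⟨h1, h2⟩ := phi_inj hxy
      exact u.2 (Complex.ext h1 h2)
    -- middle configurations
    have hm1 : Function.Injective fun x : X => ((a x : ℝ) : ℂ) + (G x : ℝ) * Complex.I := by
      intro x y hxy
      have him := congrArg Complex.im hxy
      simp at him
      exact hGinj him
    have hm2 : Function.Injective fun x : X => ((F x : ℝ) : ℂ) + (G x : ℝ) * Complex.I := by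
      intro x y hxy
      have him := congrArg Complex.im hxy
      simp at him
      exact hGinj him
    set m1 : Config X := ⟨_, hm1⟩ with hm1def
    set m2 : Config X := ⟨_, hm2⟩ with hm2def
    have j1 : Joined u m1 := by
      apply joined_segment
      intro t ht0 ht1 x y hxy
      simp only [hm1def] at hxy
      have hre := congrArg Complex.re hxy
      have him := congrArg Complex.im hxy
      simp [Complex.add_re, Complex.add_im, Complex.re_ofReal_mul, Complex.im_ofReal_mul] at hre him
      -- real parts: (1-t) * a x + t * a x = a x
      have hax : a x = a y := by
        have : (1 - t) * a x + t * a x = (1 - t) * a y + t * a y := by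
          simpa [ha] using hre
        nlinarith [this]
      rcases lt_trichotomy (b x) (b y) with hlt | heq | hlt
      · exfalso
        have hGlt : G x < G y := by
          show phi (a x) (b x) < phi (a y) (b y)
          rw [← hax]; exact phi_lt _ hlt
        have : (1 - t) * b x + t * G x = (1 - t) * b y + t * G y := by
          simpa [ha, hb, hG] using him
        exact absurd this (ne_of_lt (combo_lt ht0 ht1 hlt hGlt))
      · exact u.2 (Complex.ext hax heq)
      · exfalso
        have hGlt : G y < G x := by
          show phi (a y) (b y) < phi (a x) (b x)
          rw [hax]; exact phi_lt _ hlt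
        have : (1 - t) * b x + t * G x = (1 - t) * b y + t * G y := by
          simpa [ha, hb, hG] using him
        exact absurd this.symm (ne_of_lt (combo_lt ht0 ht1 hlt hGlt))
    have j2 : Joined m1 m2 := by
      apply joined_segment
      intro t ht0 ht1 x y hxy
      simp only [hm1def, hm2def] at hxy
      have him := congrArg Complex.im hxy
      simp [Complex.add_im, Complex.im_ofReal_mul] at him
      have : (1 - t) * G x + t * G x = (1 - t) * G y + t * G y := by simpa using him
      have hGxy : G x = G y := by nlinarith [this]
      exact hGinj hGxy
    have j3 : Joined m2 base := by
      apply joined_segment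
      intro t ht0 ht1 x y hxy
      simp only [hm2def, hbasedef] at hxy
      have hre := congrArg Complex.re hxy
      simp [Complex.add_re, Complex.re_ofReal_mul] at hre
      have : (1 - t) * F x + t * F x = (1 - t) * F y + t * F y := by simpa using hre
      have hFxy : F x = F y := by nlinarith [this]
      exact hF hFxy
    exact (j1.trans j2).trans j3
  exact ⟨⟨base⟩, fun u v => (key u).trans (key v).symm⟩

end
end

section
/- Let f be a pure ω-braid. Then f ∼ id_ω (f is homotopic relative to {0,1} to the constant path at id_ω) if and only if f|_n ∼ id_n for every n ∈ ω, where f|_n is the restriction of f to the coordinates {0,…,n−1}. -/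
open unitInterval

noncomputable section

/-- The identity configuration `id_X ∈ F_X`. -/
def idConfig (X : Set ℂ) : Config X :=
  ⟨fun x => (x : ℂ), fun _ _ h => Subtype.coe_injective h⟩

/-- The configuration given by a permutation `σ ∈ Σ_X`. -/
def permConfig {X : Set ℂ} (e : Equiv.Perm X) : Config X :=
  ⟨fun x => (e x : ℂ), fun _ _ h => e.injective (Subtype.coe_injective h)⟩

/-- An `X`-braid: a path in `F_X` from `id_X` to a point of `Σ_X`. -/
structure BraidPath (X : Set ℂ) where
  toFun : C(I, Config X)
  source' : toFun 0 = idConfig X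
  target' : ∃ e : Equiv.Perm X, toFun 1 = permConfig e

/-- Two `X`-braids are equivalent if they are homotopic relative to `{0,1}`. -/
def BraidEquiv {X : Set ℂ} (f g : BraidPath X) : Prop :=
  f.toFun.HomotopicRel g.toFun {0, 1}

/-- `ω`, the set of natural numbers regarded as a subset of `ℂ`. -/
def omegaSet : Set ℂ := {z : ℂ | ∃ k : ℕ, z = k}

/-- `n = {0, 1, …, n-1}` regarded as a subset of `ℂ`. -/
def finSet (n : ℕ) : Set ℂ := {z : ℂ | ∃ i : ℕ, i < n ∧ z = i}

lemma finSet_mono {n m : ℕ} (h : n ≤ m) : finSet n ⊆ finSet m := by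
  rintro z ⟨i, hi, rfl⟩
  exact ⟨i, lt_of_lt_of_le hi h, rfl⟩

lemma finSet_subset_omegaSet (n : ℕ) : finSet n ⊆ omegaSet := by
  rintro z ⟨i, _, rfl⟩
  exact ⟨i, rfl⟩

/-- Restriction `F_X → F_Y` of configurations, for `Y ⊆ X`. -/
def restrictConfig {X Y : Set ℂ} (h : Y ⊆ X) : C(Config X, Config Y) where
  toFun u := ⟨fun y => u.1 ⟨y.1, h y.2⟩,
    fun a b hab => Subtype.ext (congrArg (Subtype.val : {z : ℂ // z ∈ X} → ℂ) (u.2 hab))⟩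
  continuous_toFun := by
    apply Continuous.subtype_mk
    exact continuous_pi fun y => (continuous_apply _).comp continuous_subtype_val

/-- The restriction `f|_Y` of a path in `F_X` to a path in `F_Y`, for `Y ⊆ X`. -/
def restrictPath {X Y : Set ℂ} (h : Y ⊆ X) (f : C(I, Config X)) : C(I, Config Y) :=
  (restrictConfig h).comp f


/-!
Forgetting the last point, `F_{n+1} → F_n`, has the homotopy lifting property: the extra point
is pushed along by the moving points, one short time slice at a time, with bump functions
around them. The map has a section, so its fibre over `id_n` is `π₁`-injective: if `M`
contracts a fibre loop in `F_{n+1}`, then `M` followed by the section of its projection run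
backwards is a contraction whose projection retraces itself and hence contracts canonically;
lifting that contraction pushes the square into the fibre. So a nullhomotopy of `f|_n` lifts to
one of `f|_{n+1}`: lift it, then contract the last point within the fibre. Doing the `n`-th
contraction during `[a_n, a_{n+1}]`, for an increasing sequence `a_n < 1`, makes these
nullhomotopies compatible, and they assemble to a nullhomotopy of `f` because `F_ω` carries the
product topology.
-/

section PointPushing

variable {κ : Type*} [Fintype κ]

def bumpWeight (δ r : ℝ) : ℝ := max 0 (min 1 (2 - 4 * r / δ))

lemma bumpWeight_nonneg (δ r : ℝ) : 0 ≤ bumpWeight δ r := le_max_left _ _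

lemma bumpWeight_le_one (δ r : ℝ) : bumpWeight δ r ≤ 1 :=
  max_le zero_le_one (min_le_left _ _)

lemma bumpWeight_of_le {δ r : ℝ} (hδ : 0 < δ) (h : r ≤ δ / 4) : bumpWeight δ r = 1 := by
  have : 1 ≤ 2 - 4 * r / δ := by
    rw [le_sub_comm, div_le_iff₀ hδ]; linarith
  rw [bumpWeight, min_eq_left this, max_eq_right zero_le_one]

lemma bumpWeight_of_ge {δ r : ℝ} (hδ : 0 < δ) (h : δ / 2 ≤ r) : bumpWeight δ r = 0 := by
  have : 2 - 4 * r / δ ≤ 0 := by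
    rw [sub_nonpos, le_div_iff₀ hδ]; linarith
  exact max_eq_left ((min_le_right _ _).trans this)

lemma continuous_bumpWeight (δ : ℝ) : Continuous (bumpWeight δ) := by
  unfold bumpWeight; fun_prop

def pushPoint (δ : ℝ) (p v : κ → ℂ) (z : ℂ) : ℂ :=
  z + ∑ j, (bumpWeight δ (dist z (p j)) : ℂ) * v j

lemma pushPoint_zero (δ : ℝ) (p : κ → ℂ) (z : ℂ) : pushPoint δ p 0 z = z := by
  simp [pushPoint]

lemma Continuous.pushPoint {Y : Type*} [TopologicalSpace Y] {p v : Y → κ → ℂ} {z : Y → ℂ}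
    (δ : ℝ) (hp : Continuous p) (hv : Continuous v) (hz : Continuous z) :
    Continuous fun y => _root_.pushPoint δ (p y) (v y) (z y) := by
  have := continuous_bumpWeight δ
  unfold _root_.pushPoint; fun_prop

variable {δ : ℝ} {p : κ → ℂ}

lemma pushPoint_eq_self_of_forall_le (hδ : 0 < δ) (v : κ → ℂ) {z : ℂ}
    (hz : ∀ j, δ / 2 ≤ dist z (p j)) : pushPoint δ p v z = z := by
  simp [pushPoint, bumpWeight_of_ge hδ (hz _)]

lemma pushPoint_eq_of_dist_lt (hδ : 0 < δ) (hp : ∀ i j, i ≠ j → δ ≤ dist (p i) (p j))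
    (v : κ → ℂ) {z : ℂ} {i : κ} (hi : dist z (p i) < δ / 2) :
    pushPoint δ p v z = z + bumpWeight δ (dist z (p i)) * v i := by
  rw [pushPoint, Finset.sum_eq_single i (fun j _ hj => ?_) (by simp)]
  have := dist_triangle_left (p i) (p j) z
  rw [bumpWeight_of_ge hδ (by linarith [hp i j hj.symm]), Complex.ofReal_zero, zero_mul]

lemma pushPoint_ne (hδ : 0 < δ) (hp : ∀ i j, i ≠ j → δ ≤ dist (p i) (p j)) {v : κ → ℂ}
    (hv : ∀ j, ‖v j‖ ≤ δ / 8) {z : ℂ} (hz : ∀ j, z ≠ p j) (i : κ) :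
    pushPoint δ p v z ≠ p i + v i := by
  intro h
  by_cases hnear : ∃ i₀, dist z (p i₀) < δ / 2
  · obtain ⟨i₀, hi₀⟩ := hnear
    set c := bumpWeight δ (dist z (p i₀))
    rw [pushPoint_eq_of_dist_lt hδ hp v hi₀] at h
    have hcv : ‖(c : ℂ) * v i₀‖ ≤ δ / 8 := by
      rw [norm_mul, Complex.norm_real, Real.norm_of_nonneg (bumpWeight_nonneg _ _)]
      nlinarith [bumpWeight_le_one δ (dist z (p i₀)), hv i₀, norm_nonneg (v i₀)]
    have hzi : dist z (p i) ≤ δ / 4 := by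
      rw [dist_eq_norm, show z - p i = v i - c * v i₀ by linear_combination h]
      linarith [norm_sub_le (v i) (c * v i₀), hv i]
    obtain rfl : i = i₀ := by
      by_contra hne
      linarith [hp i i₀ hne, dist_triangle_left (p i) (p i₀) z]
    rw [bumpWeight_of_le hδ hzi, Complex.ofReal_one, one_mul, add_left_inj] at h
    exact hz i h
  · push Not at hnear
    rw [pushPoint_eq_self_of_forall_le hδ v hnear] at h
    have := hnear i
    rw [h, dist_eq_norm, add_sub_cancel_left] at this
    linarith [hv i]

end PointPushing

section Lifting

variable {κ : Type*} [Fintype κ]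

lemma exists_pos_forall_le_dist_of_injective {Y : Type*} [TopologicalSpace Y] [CompactSpace Y]
    (b : C(Y, κ → ℂ)) (hb : ∀ y, Function.Injective (b y)) :
    ∃ δ > 0, ∀ y i j, i ≠ j → δ ≤ dist (b y i) (b y j) := by
  have hpair : ∀ p : {p : κ × κ // p.1 ≠ p.2},
      ∃ δ > 0, ∀ y, δ ≤ dist (b y p.1.1) (b y p.1.2) := by
    intro p
    rcases isEmpty_or_nonempty Y with hY | hY
    · exact ⟨1, one_pos, fun y => hY.elim y⟩
    · obtain ⟨y₀, -, hy₀⟩ := isCompact_univ.exists_isMinOn Set.univ_nonempty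
        (by fun_prop : Continuous fun y => dist (b y p.1.1) (b y p.1.2)).continuousOn
      exact ⟨_, dist_pos.2 ((hb y₀).ne p.2), fun y => hy₀ (Set.mem_univ y)⟩
  choose δ hδ hδle using hpair
  rcases isEmpty_or_nonempty {p : κ × κ // p.1 ≠ p.2} with hP | hP
  · exact ⟨1, one_pos, fun y i j hij => (hP.false ⟨(i, j), hij⟩).elim⟩
  · obtain ⟨p₀, hp₀⟩ := Finite.exists_min δ
    exact ⟨δ p₀, hδ p₀, fun y i j hij => (hp₀ ⟨(i, j), hij⟩).trans (hδle _ y)⟩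

lemma exists_pos_forall_dist_le_of_abs_sub_le {X : Type*} [MetricSpace X] [CompactSpace X]
    (b : C(X × I, κ → ℂ)) {ε : ℝ} (hε : 0 < ε) :
    ∃ d > 0, ∀ x (u u' : I), |(u : ℝ) - u'| ≤ d → ∀ i, dist (b (x, u) i) (b (x, u') i) ≤ ε := by
  obtain ⟨d, hd, hb⟩ := Metric.uniformContinuous_iff.mp
    (CompactSpace.uniformContinuous_of_continuous b.continuous) ε hε
  refine ⟨d / 2, half_pos hd, fun x u u' hu i => (dist_le_pi_dist _ _ i).trans (hb ?_).le⟩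
  rw [Prod.dist_eq, dist_self, max_lt_iff, Subtype.dist_eq, Real.dist_eq]
  exact ⟨hd, by linarith⟩

variable {X : Type*}

/-- Stage `k` pushes `z₀ x` along `b (x, ·)` over the slices `[t 0, t 1], …, [t (k-1), t k]`,
each one cut off at the current time. -/
def slicedPush (b : X × I → κ → ℂ) (δ : ℝ) (t : ℕ → I) (z₀ : X → ℂ) : ℕ → X × I → ℂ
  | 0, w => z₀ w.1
  | k + 1, w => pushPoint δ (b (w.1, t k))
      (b (w.1, max (t k) (min w.2 (t (k + 1)))) - b (w.1, t k)) (slicedPush b δ t z₀ k w)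

variable {b : X × I → κ → ℂ} {δ : ℝ} {t : ℕ → I} {z₀ : X → ℂ}

lemma continuous_slicedPush [TopologicalSpace X] (hb : Continuous b) (hz₀ : Continuous z₀)
    (k : ℕ) : Continuous (slicedPush b δ t z₀ k) := by
  induction k with
  | zero => exact hz₀.comp continuous_fst
  | succ k ih =>
    refine Continuous.pushPoint δ (by fun_prop) ((hb.comp ?_).sub (by fun_prop)) ih
    exact continuous_fst.prodMk (continuous_const.max (continuous_snd.min continuous_const))

lemma slicedPush_eq_of_forall {x : X} {u : I}
    (h : ∀ k, b (x, max (t k) (min u (t (k + 1)))) = b (x, t k)) (k : ℕ) :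
    slicedPush b δ t z₀ k (x, u) = z₀ x := by
  induction k with
  | zero => rfl
  | succ k ih => rw [slicedPush, h k, sub_self, pushPoint_zero, ih]

lemma slicedPush_ne (hδ : 0 < δ) (hsep : ∀ w i j, i ≠ j → δ ≤ dist (b w i) (b w j))
    (ht : Monotone t) (ht₀ : t 0 = 0)
    (hclose : ∀ x k (u : I), t k ≤ u → u ≤ t (k + 1) → ∀ i,
      dist (b (x, u) i) (b (x, t k) i) ≤ δ / 8)
    (hz₀ : ∀ x i, z₀ x ≠ b (x, 0) i) (x : X) (u : I) (k : ℕ) (i : κ) :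
    slicedPush b δ t z₀ k (x, u) ≠ b (x, min u (t k)) i := by
  induction k generalizing i with
  | zero => simpa [slicedPush, ht₀] using hz₀ x i
  | succ k ih =>
    have htk : t k ≤ t (k + 1) := ht k.le_succ
    rcases le_total u (t k) with hu | hu
    · have hc : max (t k) (min u (t (k + 1))) = t k :=
        max_eq_left ((min_le_left _ _).trans hu)
      rw [slicedPush, hc, sub_self, pushPoint_zero, min_eq_left (hu.trans htk)]
      simpa only [min_eq_left hu] using ih i
    · have hc : max (t k) (min u (t (k + 1))) = min u (t (k + 1)) :=
        max_eq_right (le_min hu htk)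
      rw [min_eq_right hu] at ih
      have hv : ∀ j, ‖(b (x, min u (t (k + 1))) - b (x, t k)) j‖ ≤ δ / 8 := fun j => by
        rw [Pi.sub_apply, ← dist_eq_norm]
        exact hclose x k _ (le_min hu htk) (min_le_right _ _) j
      rw [slicedPush, hc]
      simpa using pushPoint_ne hδ (hsep _) hv ih i

theorem exists_lift_avoiding {X : Type*} [MetricSpace X] [CompactSpace X]
    (b : C(X × I, κ → ℂ)) (hb : ∀ w, Function.Injective (b w)) (z₀ : C(X, ℂ))
    (hz₀ : ∀ x i, z₀ x ≠ b (x, 0) i) :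
    ∃ Z : C(X × I, ℂ), (∀ w i, Z w ≠ b w i) ∧ (∀ x, Z (x, 0) = z₀ x) ∧
      ∀ x, (∀ u, b (x, u) = b (x, 0)) → ∀ u, Z (x, u) = z₀ x := by
  obtain ⟨δ, hδ, hsep⟩ := exists_pos_forall_le_dist_of_injective b hb
  obtain ⟨d, hd, hmod⟩ := exists_pos_forall_dist_le_of_abs_sub_le b (show 0 < δ / 8 by positivity)
  set t : ℕ → I := Set.Icc.addNSMul zero_le_one d
  obtain ⟨N, hN⟩ := Set.Icc.addNSMul_eq_right zero_le_one hd
  have hclose : ∀ x k (u : I), t k ≤ u → u ≤ t (k + 1) → ∀ i,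
      dist (b (x, u) i) (b (x, t k) i) ≤ δ / 8 := fun x k u h₁ h₂ =>
    hmod x u (t k) (Set.Icc.abs_sub_addNSMul_le zero_le_one hd.le k ⟨h₁, h₂⟩)
  refine ⟨⟨slicedPush b δ t z₀ N, continuous_slicedPush b.continuous z₀.continuous N⟩,
    fun ⟨x, u⟩ i => ?_, fun x => ?_, fun x hx u => ?_⟩
  · have := slicedPush_ne (t := t) hδ hsep (Set.Icc.monotone_addNSMul zero_le_one hd.le)
      (Subtype.ext (Set.Icc.addNSMul_zero zero_le_one)) hclose hz₀ x u N i
    rwa [show t N = 1 from Subtype.ext (hN N le_rfl), min_eq_left unitInterval.le_one'] at this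
  · exact slicedPush_eq_of_forall (fun k => by simp) N
  · exact slicedPush_eq_of_forall (fun k => by rw [hx, hx (t k)]) N

end Lifting

section AddingAPoint

lemma finite_finSet (n : ℕ) : (finSet n).Finite :=
  ((Set.finite_lt_nat n).image ((↑) : ℕ → ℂ)).subset (by rintro _ ⟨i, hi, rfl⟩; exact ⟨i, hi, rfl⟩)

instance (n : ℕ) : Fintype (finSet n) := (finite_finSet n).fintype

instance : Subsingleton (Config (finSet 0)) :=
  ⟨fun _ _ => Subtype.ext (funext fun w => by
    obtain ⟨i, hi, -⟩ := w.2
    exact absurd hi i.not_lt_zero)⟩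

lemma natCast_mem_finSet_iff {k n : ℕ} : (k : ℂ) ∈ finSet n ↔ k < n :=
  ⟨fun ⟨_, hi, h⟩ => Nat.cast_injective h ▸ hi, fun h => ⟨k, h, rfl⟩⟩

lemma natCast_notMem_finSet (n : ℕ) : (n : ℂ) ∉ finSet n :=
  fun h => (natCast_mem_finSet_iff.1 h).false

lemma eq_natCast_of_mem_finSet_succ {n : ℕ} {z : ℂ} (hz : z ∈ finSet (n + 1))
    (hz' : z ∉ finSet n) : z = n := by
  obtain ⟨i, hi, rfl⟩ := hz
  obtain rfl : i = n := by
    by_contra hne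
    exact hz' (natCast_mem_finSet_iff.2 (lt_of_le_of_ne (Nat.lt_succ_iff.1 hi) hne))
  rfl

def lastPoint (n : ℕ) : finSet (n + 1) := ⟨n, n, n.lt_succ_self, rfl⟩

/-- The Fadell–Neuwirth projection `F_{n+1} → F_n`. -/
abbrev dropLast (n : ℕ) : C(Config (finSet (n + 1)), Config (finSet n)) :=
  restrictConfig (finSet_mono n.le_succ)

variable {n : ℕ}

open Classical in
def extendConfig (u : Config (finSet n)) (z : ℂ) (hz : ∀ y, u.1 y ≠ z) :
    Config (finSet (n + 1)) :=
  ⟨fun w => if h : (w : ℂ) ∈ finSet n then u.1 ⟨w, h⟩ else z, by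
    intro a b hab
    by_cases ha : (a : ℂ) ∈ finSet n <;> by_cases hb : (b : ℂ) ∈ finSet n <;>
      simp only [ha, hb, dite_true, dite_false] at hab
    · exact Subtype.ext (congrArg (Subtype.val : finSet n → ℂ) (u.2 hab))
    · exact (hz _ hab).elim
    · exact (hz _ hab.symm).elim
    · exact Subtype.ext ((eq_natCast_of_mem_finSet_succ a.2 ha).trans
        (eq_natCast_of_mem_finSet_succ b.2 hb).symm)⟩

lemma dropLast_extendConfig (u : Config (finSet n)) (z : ℂ) (hz : ∀ y, u.1 y ≠ z) :
    dropLast n (extendConfig u z hz) = u :=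
  Subtype.ext (funext fun y => dif_pos y.2)

lemma eq_extendConfig_iff {v : Config (finSet (n + 1))} {u : Config (finSet n)} {z : ℂ}
    {hz : ∀ y, u.1 y ≠ z} :
    v = extendConfig u z hz ↔ dropLast n v = u ∧ v.1 (lastPoint n) = z := by
  constructor
  · rintro rfl
    exact ⟨dropLast_extendConfig u z hz, dif_neg (natCast_notMem_finSet n)⟩
  · rintro ⟨rfl, rfl⟩
    refine Subtype.ext (funext fun w => ?_)
    by_cases hw : (w : ℂ) ∈ finSet n
    · simp only [extendConfig, dif_pos hw]
      rfl
    · simp only [extendConfig, dif_neg hw]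
      exact congrArg v.1 (Subtype.ext (eq_natCast_of_mem_finSet_succ w.2 hw))

lemma Continuous.extendConfig {Y : Type*} [TopologicalSpace Y] {U : Y → Config (finSet n)}
    {Z : Y → ℂ} {hUZ : ∀ y j, (U y).1 j ≠ Z y} (hU : Continuous U) (hZ : Continuous Z) :
    Continuous fun y => _root_.extendConfig (U y) (Z y) (hUZ y) := by
  refine Continuous.subtype_mk (continuous_pi fun w => ?_) _
  by_cases hw : (w : ℂ) ∈ finSet n
  · simp only [dif_pos hw]
    exact (continuous_apply _).comp (continuous_subtype_val.comp hU)
  · simpa only [_root_.extendConfig, dif_neg hw] using hZ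

theorem exists_lift_dropLast {X : Type*} [MetricSpace X] [CompactSpace X]
    (B : C(X × I, Config (finSet n))) (L₀ : C(X, Config (finSet (n + 1))))
    (h₀ : ∀ x, dropLast n (L₀ x) = B (x, 0)) :
    ∃ L : C(X × I, Config (finSet (n + 1))), (∀ w, dropLast n (L w) = B w) ∧
      (∀ x, L (x, 0) = L₀ x) ∧ ∀ x, (∀ u, B (x, u) = B (x, 0)) → ∀ u, L (x, u) = L₀ x := by
  have hlast : ∀ x i, (L₀ x).1 (lastPoint n) ≠ (B (x, 0)).1 i := fun x i h => by
    rw [← h₀ x] at h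
    apply natCast_notMem_finSet n
    rw [show (n : ℂ) = i from Subtype.ext_iff.1 ((L₀ x).2 h)]
    exact i.2
  obtain ⟨Z, hZ, hZ₀, hZconst⟩ := exists_lift_avoiding
    ⟨fun w => (B w).1, by fun_prop⟩ (fun w => (B w).2)
    ⟨fun x => (L₀ x).1 (lastPoint n),
      (continuous_apply _).comp (continuous_subtype_val.comp L₀.continuous)⟩ hlast
  have hBZ : ∀ w j, (B w).1 j ≠ Z w := fun w j h => hZ w j h.symm
  refine ⟨⟨fun w => extendConfig (B w) (Z w) (hBZ w),
      Continuous.extendConfig (hUZ := hBZ) B.continuous Z.continuous⟩,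
    fun w => dropLast_extendConfig _ _ (hBZ w), fun x => ?_, fun x hx u => ?_⟩
  · exact ((eq_extendConfig_iff (hz := hBZ _)).2 ⟨h₀ x, (hZ₀ x).symm⟩).symm
  · exact ((eq_extendConfig_iff (hz := hBZ _)).2 ⟨(h₀ x).trans (hx u).symm,
      (hZconst x (fun u => congrArg Subtype.val (hx u)) u).symm⟩).symm

end AddingAPoint

abbrev projI : ℝ → I := Set.projIcc 0 1 zero_le_one

lemma projI_of_nonpos {x : ℝ} (hx : x ≤ 0) : projI x = 0 := projIcc_eq_zero.2 hx

lemma projI_of_one_le {x : ℝ} (hx : 1 ≤ x) : projI x = 1 := projIcc_eq_one.2 hx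

section Fibre

variable {n : ℕ}

/-- The new point lies on the real axis, to the right of every point of `u`. -/
def extendFar (u : Config (finSet n)) : Config (finSet (n + 1)) :=
  extendConfig u ((n + ∑ y, ‖u.1 y - y‖ : ℝ) : ℂ) (by
    intro y hy
    set S := ∑ y, ‖u.1 y - y‖
    obtain ⟨i, hi, hyi⟩ := y.2
    have hle : ‖u.1 y - y‖ ≤ S :=
      Finset.single_le_sum (f := fun y => ‖u.1 y - y‖) (fun _ _ => norm_nonneg _)
        (Finset.mem_univ y)
    have hin : (i : ℝ) < n := by exact_mod_cast hi
    have hS : 0 ≤ S := Finset.sum_nonneg fun _ _ => norm_nonneg _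
    rw [hy, hyi, show ((n + S : ℝ) : ℂ) - i = ((n - i + S : ℝ) : ℂ) by push_cast; ring,
      Complex.norm_real, Real.norm_of_nonneg (by linarith)] at hle
    linarith)

lemma dropLast_extendFar (u : Config (finSet n)) : dropLast n (extendFar u) = u :=
  dropLast_extendConfig _ _ _

lemma extendFar_idConfig : extendFar (idConfig (finSet n)) = idConfig (finSet (n + 1)) :=
  ((eq_extendConfig_iff (v := idConfig _)).2 ⟨rfl, by simp [idConfig, lastPoint]⟩).symm

lemma continuous_extendFar : Continuous (extendFar (n := n)) :=
  Continuous.extendConfig continuous_id <| Complex.continuous_ofReal.comp <|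
    continuous_const.add <| continuous_finsetSum _ fun y _ =>
      (((continuous_apply y).comp continuous_subtype_val).sub continuous_const).norm

def appendSectionReverse (M : C(I × I, Config (finSet (n + 1))))
    (hM : ∀ t, extendFar (dropLast n (M (1, t))) = M (1, t)) :
    C(I × I, Config (finSet (n + 1))) :=
  ⟨fun w => if (w.1 : ℝ) ≤ 1 / 2 then M (projI (2 * w.1), w.2)
    else extendFar (dropLast n (M (projI (2 - 2 * w.1), w.2))), by
    refine Continuous.if_le (by fun_prop) (continuous_extendFar.comp (by fun_prop))
      (by fun_prop) continuous_const fun w hw => ?_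
    rw [hw, show (2 : ℝ) * (1 / 2) = 1 by norm_num, show (2 : ℝ) - 1 = 1 by norm_num,
      projI_of_one_le le_rfl, hM]⟩

section appendSectionReverse

variable {M : C(I × I, Config (finSet (n + 1)))}
  {hM : ∀ t, extendFar (dropLast n (M (1, t))) = M (1, t)}

lemma appendSectionReverse_zero (t : I) : appendSectionReverse M hM (0, t) = M (0, t) := by
  simp [appendSectionReverse]

lemma appendSectionReverse_one (t : I) :
    appendSectionReverse M hM (1, t) = extendFar (dropLast n (M (0, t))) := by
  norm_num [appendSectionReverse]

lemma dropLast_appendSectionReverse (w : I × I) :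
    dropLast n (appendSectionReverse M hM w) =
      dropLast n (M (projI (min (2 * w.1 : ℝ) (2 - 2 * w.1)), w.2)) := by
  simp only [appendSectionReverse, ContinuousMap.coe_mk]
  split_ifs with hs
  · rw [min_eq_left (by linarith)]
  · rw [dropLast_extendFar, min_eq_right (by linarith)]

lemma appendSectionReverse_of_forall_eq {x : I} {y : Config (finSet (n + 1))}
    (hx : ∀ s, M (s, x) = y) (hy : extendFar (dropLast n y) = y) (s : I) :
    appendSectionReverse M hM (s, x) = y := by
  simp only [appendSectionReverse, ContinuousMap.coe_mk, hx, hy, ite_self]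

end appendSectionReverse

theorem exists_fibrewise_nullhomotopy {γ : C(I, Config (finSet (n + 1)))}
    (hγ : ∀ t, dropLast n (γ t) = idConfig (finSet n))
    (h : γ.HomotopicRel (ContinuousMap.const I (idConfig (finSet (n + 1)))) {0, 1}) :
    ∃ K : γ.HomotopyRel (ContinuousMap.const I (idConfig (finSet (n + 1)))) {0, 1},
      ∀ w, dropLast n (K w) = idConfig (finSet n) := by
  obtain ⟨M⟩ := h
  have hMside : ∀ s, ∀ x ∈ ({0, 1} : Set I), M (s, x) = idConfig _ := fun s x hx =>
    (M.eq_fst s hx).trans (M.fst_eq_snd hx)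
  let M₂ := appendSectionReverse M.toContinuousMap fun t => by
    change extendFar (dropLast n (M (1, t))) = M (1, t)
    rw [M.apply_one]
    exact extendFar_idConfig
  -- `dropLast ∘ M₂` retraces itself, so `B` contracts it keeping the boundary of the square at
  -- `id_n`; the lift of `B` ends in the fibre.
  let B : C((I × I) × I, Config (finSet n)) :=
    ⟨fun p => dropLast n (M (projI ((1 - p.2 : ℝ) * min (2 * p.1.1 : ℝ) (2 - 2 * p.1.1)), p.1.2)),
      (dropLast n).continuous.comp <| M.continuous.comp <|
        (continuous_projIcc.comp (by fun_prop)).prodMk (by fun_prop)⟩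
  obtain ⟨L, hLB, -, hLconst⟩ := exists_lift_dropLast B M₂ fun w =>
    (dropLast_appendSectionReverse w).trans (by simp [B])
  have hL : ∀ w, (∀ r, B (w, r) = B (w, 0)) → L (w, 1) = M₂ w := fun w h => hLconst w h 1
  have hBend : ∀ s t, (s = 0 ∨ s = 1) → ∀ r, B ((s, t), r) = dropLast n (M (0, t)) := by
    rintro s t hs r
    have : min (2 * (s : ℝ)) (2 - 2 * s) = 0 := by rcases hs with rfl | rfl <;> norm_num
    simp only [B, ContinuousMap.coe_mk, this, mul_zero, projI_of_nonpos le_rfl]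
  have hBside : ∀ s, ∀ x ∈ ({0, 1} : Set I), ∀ r, B ((s, x), r) = idConfig (finSet n) :=
    fun s x hx r => by simp only [B, ContinuousMap.coe_mk, hMside _ x hx]; rfl
  refine ⟨⟨⟨L.comp ⟨fun w => (w, 1), by fun_prop⟩, fun t => ?_, fun t => ?_⟩, fun s x hx => ?_⟩,
    fun w => ?_⟩
  · change L ((0, t), 1) = γ t
    rw [hL _ fun r => (hBend 0 t (.inl rfl) r).trans (hBend 0 t (.inl rfl) 0).symm,
      appendSectionReverse_zero]
    exact M.apply_zero t
  · change L ((1, t), 1) = idConfig _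
    rw [hL _ fun r => (hBend 1 t (.inr rfl) r).trans (hBend 1 t (.inr rfl) 0).symm,
      appendSectionReverse_one]
    change extendFar (dropLast n (M (0, t))) = _
    rw [M.apply_zero, hγ]
    exact extendFar_idConfig
  · change L ((s, x), 1) = γ x
    rw [hL _ fun r => (hBside s x hx r).trans (hBside s x hx 0).symm,
      appendSectionReverse_of_forall_eq (fun s => hMside s x hx) extendFar_idConfig,
      M.fst_eq_snd hx]
    rfl
  · change dropLast n (L (w, 1)) = idConfig _
    simp [hLB, B, hγ]

end Fibre

section Tower

lemma homotopicRel_columns_of_const_sides {Y : Type*} [TopologicalSpace Y] (L : C(I × I, Y))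
    (hL : ∀ x ∈ ({0, 1} : Set I), ∀ s, L (x, s) = L (x, 0)) (a : I) :
    (ContinuousMap.mk (fun t => L (t, 0)) (by fun_prop)).HomotopicRel
      (ContinuousMap.mk (fun t => L (t, a)) (by fun_prop)) {0, 1} :=
  ⟨⟨⟨⟨fun w => L (w.2, a * w.1), by fun_prop⟩, fun t => by simp, fun t => by simp⟩,
    fun s x hx => hL x hx _⟩⟩

def FrozenNullhomotopy {Y : Type*} [TopologicalSpace Y] (g : C(I, Y)) (y : Y) (a : I) :
    Type _ :=
  {H : g.HomotopyRel (ContinuousMap.const I y) {0, 1} // ∀ s t, a ≤ s → H (s, t) = y}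

def FrozenNullhomotopy.ofSubsingleton {Y : Type*} [TopologicalSpace Y] [Subsingleton Y]
    (g : C(I, Y)) (y : Y) (a : I) : FrozenNullhomotopy g y a :=
  ⟨⟨⟨ContinuousMap.const _ y, fun _ => Subsingleton.elim _ _, fun _ => rfl⟩,
    fun _ _ _ => Subsingleton.elim _ _⟩, fun _ _ _ => rfl⟩

variable {n : ℕ}

theorem exists_lift_and_fibrewise_nullhomotopy {g : C(I, Config (finSet (n + 1)))} {a : I}
    (H : FrozenNullhomotopy ((dropLast n).comp g) (idConfig (finSet n)) a)
    (hg : g.HomotopicRel (ContinuousMap.const I (idConfig (finSet (n + 1)))) {0, 1}) :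
    ∃ L : C(I × I, Config (finSet (n + 1))),
      (∀ t s, dropLast n (L (t, s)) = H.1 (s, t)) ∧ (∀ t, L (t, 0) = g t) ∧
      (∀ x ∈ ({0, 1} : Set I), ∀ s, L (x, s) = g x) ∧
      ∃ K : (ContinuousMap.mk (fun t => L (t, a)) (by fun_prop)).HomotopyRel
        (ContinuousMap.const I (idConfig (finSet (n + 1)))) {0, 1},
        ∀ w, dropLast n (K w) = idConfig (finSet n) := by
  obtain ⟨H, hfrozen⟩ := H
  obtain ⟨L, hLH, hL₀, hLconst⟩ := exists_lift_dropLast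
    (H.toContinuousMap.comp ⟨Prod.swap, continuous_swap⟩) g (fun t => (H.apply_zero t).symm)
  have hLside : ∀ x ∈ ({0, 1} : Set I), ∀ s, L (x, s) = g x := fun x hx =>
    hLconst x fun s => (H.eq_fst s hx).trans (H.eq_fst 0 hx).symm
  refine ⟨L, fun t s => hLH (t, s), hL₀, hLside, exists_fibrewise_nullhomotopy
    (fun t => (hLH (t, a)).trans (hfrozen a t le_rfl)) ?_⟩
  refine ContinuousMap.HomotopicRel.trans (ContinuousMap.HomotopicRel.symm ?_) hg
  convert homotopicRel_columns_of_const_sides L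
    (fun x hx s => (hLside x hx s).trans (hLside x hx 0).symm) a using 1
  ext1 t
  exact (hL₀ t).symm

theorem exists_frozenNullhomotopy_lift {g : C(I, Config (finSet (n + 1)))} {a a' : I}
    (haa' : a < a') (H : FrozenNullhomotopy ((dropLast n).comp g) (idConfig (finSet n)) a)
    (hg : g.HomotopicRel (ContinuousMap.const I (idConfig (finSet (n + 1)))) {0, 1}) :
    ∃ H' : FrozenNullhomotopy g (idConfig (finSet (n + 1))) a',
      ∀ w, dropLast n (H'.1 w) = H.1 w := by
  obtain ⟨L, hLH, hL₀, hLside, K, hK⟩ := exists_lift_and_fibrewise_nullhomotopy H hg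
  have ha' : (0 : ℝ) < a' - a := sub_pos.2 haa'
  have hK₁ : ∀ s : I, a' ≤ s → ∀ t, K (projI ((s - a) / (a' - a)), t) = idConfig _ :=
    fun s hs t => by
      rw [projI_of_one_le ((one_le_div ha').2 (by linarith [Subtype.coe_le_coe.2 hs])),
        K.apply_one, ContinuousMap.const_apply]
  let H' : C(I × I, Config (finSet (n + 1))) :=
    ⟨fun w => if (w.1 : ℝ) ≤ a then L (w.2, w.1) else K (projI ((w.1 - a) / (a' - a)), w.2), by
      refine Continuous.if_le (by fun_prop) (K.continuous.comp
        ((continuous_projIcc.comp (by fun_prop)).prodMk continuous_snd)) (by fun_prop)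
        continuous_const fun w hw => ?_
      rw [hw, sub_self, zero_div, projI_of_nonpos le_rfl, K.apply_zero, Subtype.ext hw]
      rfl⟩
  have ha1 : ¬ ((1 : I) : ℝ) ≤ a := not_le.2 (haa'.trans_le le_one')
  refine ⟨⟨⟨⟨H', fun t => ?_, fun t => ?_⟩, fun s x hx => ?_⟩, fun s t hs => ?_⟩, fun ⟨s, t⟩ => ?_⟩
  · exact (if_pos a.2.1).trans (hL₀ t)
  · exact (if_neg ha1).trans (hK₁ 1 le_one' t)
  · change ite _ _ _ = g x
    split_ifs
    · exact hLside x hx s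
    · exact (K.eq_fst _ hx).trans (hLside x hx a)
  · exact (if_neg (not_le.2 (haa'.trans_le hs))).trans (hK₁ s hs t)
  · change dropLast n (ite _ _ _) = H.1 (s, t)
    split_ifs with hs
    · exact hLH t s
    · exact (hK _).trans (H.2 s t (le_of_not_ge hs)).symm

theorem exists_compatible_frozenNullhomotopies (f : C(I, Config omegaSet))
    (hf : ∀ n, (restrictPath (finSet_subset_omegaSet n) f).HomotopicRel
      (ContinuousMap.const I (idConfig (finSet n))) {0, 1})
    {a : ℕ → I} (ha : StrictMono a) :
    ∃ H : ∀ n, FrozenNullhomotopy (restrictPath (finSet_subset_omegaSet n) f)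
      (idConfig (finSet n)) (a n), ∀ n w, dropLast n ((H (n + 1)).1 w) = (H n).1 w := by
  choose step hstep using fun n (H : FrozenNullhomotopy
      (restrictPath (finSet_subset_omegaSet n) f) (idConfig (finSet n)) (a n)) =>
    exists_frozenNullhomotopy_lift (n := n)
      (g := restrictPath (finSet_subset_omegaSet (n + 1)) f) (ha n.lt_succ_self) H (hf (n + 1))
  let H : ∀ n, FrozenNullhomotopy (restrictPath (finSet_subset_omegaSet n) f)
      (idConfig (finSet n)) (a n) :=
    fun n => Nat.rec (FrozenNullhomotopy.ofSubsingleton _ _ _) step n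
  exact ⟨H, fun n => hstep n (H n)⟩

end Tower

section InverseLimit

lemma eq_of_forall_restrictConfig_eq {u v : Config omegaSet}
    (h : ∀ n, restrictConfig (finSet_subset_omegaSet n) u =
      restrictConfig (finSet_subset_omegaSet n) v) : u = v := by
  refine Subtype.ext (funext fun z => ?_)
  obtain ⟨k, hk⟩ := z.2
  exact congrArg (fun w : Config (finSet (k + 1)) => w.1 ⟨z, k, k.lt_succ_self, hk⟩) (h (k + 1))

theorem exists_config_omega_of_compatible {W : Type*} [TopologicalSpace W]
    (φ : ∀ n, C(W, Config (finSet n))) (hφ : ∀ n w, dropLast n (φ (n + 1) w) = φ n w) :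
    ∃ Φ : C(W, Config omegaSet),
      ∀ n w, restrictConfig (finSet_subset_omegaSet n) (Φ w) = φ n w := by
  have hle : ∀ m m' (h : m ≤ m') w, restrictConfig (finSet_mono h) (φ m' w) = φ m w := by
    intro m m' h w
    induction m', h using Nat.le_induction with
    | base => rfl
    | succ m' h ih => exact (congrArg _ (hφ m' w)).trans ih
  have hcoord : ∀ m m' w z (hz : z ∈ finSet m) (hz' : z ∈ finSet m'),
      (φ m w).1 ⟨z, hz⟩ = (φ m' w).1 ⟨z, hz'⟩ := fun m m' w z hz hz' => by
    rw [← hle m (max m m') (le_max_left _ _) w, ← hle m' (max m m') (le_max_right _ _) w]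
    rfl
  have hmem : ∀ z : omegaSet, (z : ℂ) ∈ finSet (z.2.choose + 1) := fun z =>
    ⟨_, z.2.choose.lt_succ_self, z.2.choose_spec⟩
  refine ⟨⟨fun w => ⟨fun z => (φ _ w).1 ⟨z, hmem z⟩, fun z z' hzz' => ?_⟩, ?_⟩, fun n w => ?_⟩
  · set m := max (z.2.choose + 1) (z'.2.choose + 1)
    dsimp only at hzz'
    rw [hcoord _ m w z _ (finSet_mono (le_max_left _ _) (hmem z)),
      hcoord _ m w z' _ (finSet_mono (le_max_right _ _) (hmem z'))] at hzz'
    exact Subtype.ext (congrArg (Subtype.val : finSet m → ℂ) ((φ m w).2 hzz'))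
  · exact Continuous.subtype_mk (continuous_pi fun z =>
      (continuous_apply _).comp (continuous_subtype_val.comp (φ _).continuous)) _
  · exact Subtype.ext (funext fun z => hcoord _ _ w z _ z.2)

end InverseLimit

theorem pure_braid_nullhomotopic_iff_restrictions_general (f : BraidPath omegaSet) :
    f.toFun.HomotopicRel (ContinuousMap.const I (idConfig omegaSet)) {0, 1} ↔
      ∀ n : ℕ,
        (restrictPath (finSet_subset_omegaSet n) f.toFun).HomotopicRel
          (ContinuousMap.const I (idConfig (finSet n))) {0, 1} := by
  refine ⟨fun h n => h.comp_continuousMap (restrictConfig _), fun h => ?_⟩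
  obtain ⟨a, ha, -⟩ := exists_seq_strictMono_tendsto' (zero_lt_one' I)
  obtain ⟨H, hH⟩ := exists_compatible_frozenNullhomotopies f.toFun h ha
  obtain ⟨Φ, hΦ⟩ := exists_config_omega_of_compatible (fun n => (H n).1.toContinuousMap) hH
  refine ⟨⟨⟨Φ, fun t => ?_, fun t => ?_⟩, fun s x hx => ?_⟩⟩ <;>
    refine eq_of_forall_restrictConfig_eq fun n => (hΦ n _).trans ?_
  · exact (H n).1.apply_zero t
  · exact (H n).1.apply_one t
  · exact (H n).1.eq_fst s hx

/-- **Lemma 2.7**: a pure `ω`-braid `f` is homotopic rel `{0,1}` to the constant path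
at `id_ω` if and only if `f|_n` is homotopic rel `{0,1}` to the constant path at `id_n`
for every `n ∈ ω`. -/
theorem pure_braid_nullhomotopic_iff_restrictions (f : BraidPath omegaSet)
    (hpure : f.toFun 1 = idConfig omegaSet) :
    f.toFun.HomotopicRel (ContinuousMap.const I (idConfig omegaSet)) {0, 1} ↔
      ∀ n : ℕ,
        (restrictPath (finSet_subset_omegaSet n) f.toFun).HomotopicRel
          (ContinuousMap.const I (idConfig (finSet n))) {0, 1} :=
  pure_braid_nullhomotopic_iff_restrictions_general f

end
end

section
/- Let Y be a path-connected Hausdorff space which is first countable at a point y ∈ Y, let A be an abelian group, and let h : π₁(Y,y) → A be a surjective homomorphism. Suppose that for every loop f in Y with base point y there exists a sequence of loops f_n (n ∈ ω) with base point y such that h([f_n]) = h([f]) for all n and the images Im(f_n) converge to y (i.e., for every neighborhood U of y, Im(f_n) ⊆ U for all sufficiently large n). Then A is a cotorsion abelian group, i.e., Ext¹_ℤ(ℚ, A) = 0. -/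
noncomputable section

/-- An abelian group `A` is cotorsion if `Ext¹_ℤ(ℚ, A) = 0`; equivalently, every
short exact sequence `0 → A → B → ℚ → 0` of abelian groups splits. -/
def IsCotorsion (A : Type) [AddCommGroup A] : Prop :=
  ∀ (B : Type) [AddCommGroup B] (ι : A →+ B) (π : B →+ ℚ),
    Function.Injective ι → Function.Surjective π →
    (∀ b : B, π b = 0 ↔ b ∈ ι.range) →
    ∃ ρ : B →+ A, ρ.comp ι = AddMonoidHom.id A

/-- The element of the fundamental group `π₁(Y, y)` determined by a loop at `y`. -/
def loopClass {Y : Type} [TopologicalSpace Y] {y : Y} (f : Path y y) :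
    FundamentalGroup Y y :=
  FundamentalGroup.fromPath (X := TopCat.of Y)
    (Quotient.mk (Path.Homotopic.setoid y y) f)

/-!
Choose loops `f n` at `y` with `h [f n] = a n` whose images shrink to `y`. The infinite
concatenation `G n = f n · (G (n + 1)) ^ (n + 1)` is then a genuine loop: it agrees with its
depth-`j` truncation except at points where both lie in the `j`-th neighbourhood of `y`, and
such a uniform approximation near `y` preserves continuity in a Hausdorff space. Thus
`b n = h [G n]` solves `b n = a n + (n + 1) b (n + 1)` for every sequence `a`. Solvability of
these equations makes `A` cotorsion: in an extension `0 → A → B → ℚ → 0`, lifts of `1 / n!`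
corrected by a solution form a system `e n = (n + 1) e (n + 1)`, and `k / N! ↦ k e N` is a
section of `B → ℚ`.
-/

open Nat Filter Set Topology unitInterval

lemma eventually_exists_eq_intCast_div_factorial (q : ℚ) :
    ∀ᶠ N in atTop, ∃ k : ℤ, q = k / N ! := by
  filter_upwards [eventually_ge_atTop q.den] with N hN
  obtain ⟨c, hc⟩ := Nat.dvd_factorial q.pos hN
  refine ⟨q.num * c, ?_⟩
  have hc0 : (c : ℚ) ≠ 0 := by exact_mod_cast right_ne_zero_of_mul (hc ▸ factorial_ne_zero N)
  rw [hc, Int.cast_mul, Nat.cast_mul, Int.cast_natCast, mul_div_mul_right _ _ hc0]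
  exact (Rat.num_div_den q).symm

def IsFactorialTower {B : Type*} [AddCommGroup B] (e : ℕ → B) : Prop :=
  ∀ n, e n = (n + 1) • e (n + 1)

namespace IsFactorialTower

variable {B : Type*} [AddCommGroup B] {e : ℕ → B}

lemma exists_factorial_mul_eq_and_eq_nsmul (he : IsFactorialTower e) {M N : ℕ} (hMN : M ≤ N) :
    ∃ c : ℕ, M ! * c = N ! ∧ e M = c • e N := by
  induction N, hMN using Nat.le_induction with
  | base => exact ⟨1, mul_one _, (one_smul ℕ _).symm⟩
  | succ N _ ih =>
    obtain ⟨c, hc, hce⟩ := ih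
    refine ⟨c * (N + 1), by rw [← mul_assoc, hc, factorial_succ, mul_comm], ?_⟩
    rw [hce, he N, mul_nsmul']

lemma zsmul_eq_zsmul_of_div_factorial_eq (he : IsFactorialTower e) {k k' : ℤ} {M N : ℕ}
    (h : (k : ℚ) / M ! = k' / N !) : k • e M = k' • e N := by
  wlog hMN : M ≤ N generalizing k k' M N
  · exact (this h.symm (le_of_not_ge hMN)).symm
  obtain ⟨c, hc, hce⟩ := he.exists_factorial_mul_eq_and_eq_nsmul hMN
  have hk' : (k' : ℚ) = k * c := by
    rw [eq_div_iff (by positivity)] at h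
    rw [← h, ← hc, Nat.cast_mul]
    field_simp
  rw [hce, show k' = k * c by exact_mod_cast hk', mul_zsmul, natCast_zsmul]

lemma exists_addMonoidHom_rat (he : IsFactorialTower e) :
    ∃ s : ℚ →+ B, ∀ (k : ℤ) (N : ℕ), s (k / N !) = k • e N := by
  choose N k hk using fun q => (eventually_exists_eq_intCast_div_factorial q).exists
  have hs (q : ℚ) (k' : ℤ) (M : ℕ) (h : q = k' / M !) : k q • e (N q) = k' • e M :=
    he.zsmul_eq_zsmul_of_div_factorial_eq ((hk q).symm.trans h)
  refine ⟨AddMonoidHom.mk' (fun q => k q • e (N q)) fun p q => ?_, fun k' M => hs _ k' M rfl⟩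
  obtain ⟨M, ⟨kp, hp⟩, ⟨kq, hq⟩⟩ :=
    ((eventually_exists_eq_intCast_div_factorial p).and
      (eventually_exists_eq_intCast_div_factorial q)).exists
  rw [hs p kp M hp, hs q kq M hq, hs (p + q) (kp + kq) M (by rw [hp, hq]; push_cast; ring),
    add_zsmul]

end IsFactorialTower

lemma exists_isFactorialTower_of_forall_exists_eq_add_succ_nsmul {A B : Type*}
    [AddCommGroup A] [AddCommGroup B]
    (H : ∀ a : ℕ → A, ∃ b : ℕ → A, ∀ n, b n = a n + (n + 1) • b (n + 1))
    {ι : A →+ B} {π : B →+ ℚ} (hπ : Function.Surjective π)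
    (hexact : ∀ b, π b = 0 ↔ b ∈ ι.range) :
    ∃ e : ℕ → B, IsFactorialTower e ∧ π (e 0) = 1 := by
  choose c hc using fun n : ℕ => hπ (n ! : ℚ)⁻¹
  have hker : ∀ n, π (c n - (n + 1) • c (n + 1)) = 0 := fun n => by
    rw [map_sub, map_nsmul, hc, hc, factorial_succ, nsmul_eq_mul]
    push_cast
    field_simp
    ring
  choose a ha using fun n => (hexact _).1 (hker n)
  obtain ⟨b, hb⟩ := H a
  refine ⟨fun n => c n - ι (b n), fun n => ?_, ?_⟩
  · dsimp only
    rw [hb n, map_add, map_nsmul, ha n, smul_sub]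
    abel
  · rw [map_sub, hc, (hexact _).2 ⟨b 0, rfl⟩]
    simp

theorem isCotorsion_of_forall_exists_eq_add_succ_nsmul {A : Type} [AddCommGroup A]
    (H : ∀ a : ℕ → A, ∃ b : ℕ → A, ∀ n, b n = a n + (n + 1) • b (n + 1)) :
    IsCotorsion A := by
  intro B _ ι π hι hπ hexact
  obtain ⟨e, he, he0⟩ := exists_isFactorialTower_of_forall_exists_eq_add_succ_nsmul H hπ hexact
  obtain ⟨s, hs⟩ := he.exists_addMonoidHom_rat
  have hs1 : π (s 1) = 1 := by simpa [he0] using congrArg π (hs 1 0)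
  have hsection : π.toIntLinearMap ∘ₗ s.toIntLinearMap = .id := by
    ext q
    simpa [hs1] using map_rat_smul (π.comp s) q 1
  have hex : Function.Exact ι.toIntLinearMap π.toIntLinearMap := fun b => hexact b
  have hsplit := (hex.split_tfae hι hπ).out 0 1
  obtain ⟨ρ, hρ⟩ := hsplit.1 ⟨_, hsection⟩
  exact ⟨ρ.toAddMonoidHom, AddMonoidHom.ext (LinearMap.congr_fun hρ)⟩

theorem continuous_of_forall_nhds_eq_or_mem {X Y ι : Type*} [TopologicalSpace X]
    [TopologicalSpace Y] [T2Space Y] {y : Y} {g : ι → X → Y} (hg : ∀ j, Continuous (g j))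
    {G : X → Y} (hG : ∀ U ∈ 𝓝 y, ∃ j, ∀ x, G x = g j x ∨ G x ∈ U ∧ g j x ∈ U) :
    Continuous G := by
  refine continuous_iff_continuousAt.2 fun x W hW => mem_map.2 ?_
  by_cases hx : G x = y
  · rw [hx] at hW
    obtain ⟨j, hj⟩ := hG (interior W) (interior_mem_nhds.2 hW)
    have hgx : g j x ∈ interior W := by
      rcases hj x with hxj | ⟨-, hxj⟩
      · rw [← hxj, hx]; exact mem_interior_iff_mem_nhds.2 hW
      · exact hxj
    filter_upwards [(hg j).continuousAt.preimage_mem_nhds (isOpen_interior.mem_nhds hgx)]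
      with u hu
    rcases hj u with huj | ⟨huj, -⟩
    · rw [mem_preimage, huj]; exact interior_subset hu
    · exact (interior_subset huj : G u ∈ W)
  · obtain ⟨O, O', hO, hO', hyO, hxO', hOO'⟩ := t2_separation (Ne.symm hx)
    obtain ⟨j, hj⟩ := hG O (hO.mem_nhds hyO)
    have hGx : G x = g j x := (hj x).resolve_right fun h => hOO'.notMem_of_mem_left h.1 hxO'
    rw [hGx] at hW hxO'
    filter_upwards [(hg j).continuousAt.preimage_mem_nhds (inter_mem hW (hO'.mem_nhds hxO'))]
      with u ⟨huW, huO'⟩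
    rcases hj u with huj | ⟨-, huj⟩
    · rw [mem_preimage, huj]; exact huW
    · exact absurd huO' (hOO'.notMem_of_mem_left huj)

section FirstHit

open scoped Classical

variable {α β : Type*} (step : α → α) (p : α → Prop) (v : α → β) (d : β)

def firstHitValue (a : α) : β :=
  if h : ∃ k, p (step^[k] a) then v (step^[Nat.find h] a) else d

variable {step p v d} {a : α}

lemma firstHitValue_of_pos (ha : p a) : firstHitValue step p v d a = v a := by
  have h : ∃ k, p (step^[k] a) := ⟨0, ha⟩
  rw [firstHitValue, dif_pos h, (Nat.find_eq_zero h).2 ha, Function.iterate_zero_apply]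

lemma firstHitValue_of_not (ha : ¬ p a) :
    firstHitValue step p v d a = firstHitValue step p v d (step a) := by
  by_cases h : ∃ k, p (step^[k] (step a))
  · have h₀ : ∃ k, p (step^[k] a) := ⟨_ + 1, Nat.find_spec h⟩
    rw [firstHitValue, firstHitValue, dif_pos h₀, dif_pos h, Nat.find_comp_succ h₀ h ha]
    rfl
  · rw [firstHitValue, firstHitValue, dif_neg h, dif_neg]
    rintro ⟨_ | k, hk⟩
    exacts [ha hk, h ⟨k, hk⟩]

lemma firstHitValue_mem {S : Set β} (hd : d ∈ S) (hv : ∀ k, v (step^[k] a) ∈ S) :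
    firstHitValue step p v d a ∈ S := by
  unfold firstHitValue
  split_ifs
  exacts [hv _, hd]

end FirstHit

def powReparam : ℕ → ℝ → ℝ
  | 0, _ => 0
  | m + 1, s => if s ≤ 1 / 2 then powReparam m (2 * s) else 2 * s - 1

lemma powReparam_mem {s : ℝ} (hs : s ∈ Icc (0 : ℝ) 1) (m : ℕ) :
    powReparam m s ∈ Icc (0 : ℝ) 1 := by
  induction m generalizing s with
  | zero => exact ⟨le_rfl, zero_le_one⟩
  | succ m ih =>
    rw [powReparam]
    split_ifs with h
    · exact ih ⟨by linarith [hs.1], by linarith⟩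
    · exact ⟨by linarith, by linarith [hs.2]⟩

lemma powReparam_succ_one (m : ℕ) : powReparam (m + 1) 1 = 1 := by
  norm_num [powReparam]

section LoopPow

variable {Y : Type*} [TopologicalSpace Y] {y : Y}

def loopPow (g : Path y y) : ℕ → Path y y
  | 0 => Path.refl y
  | m + 1 => (loopPow g m).trans g

lemma loopPow_extend (g : Path y y) {s : ℝ} (hs : s ∈ Icc (0 : ℝ) 1) (m : ℕ) :
    (loopPow g m).extend s = g.extend (powReparam m s) := by
  induction m generalizing s with
  | zero => simp [loopPow, powReparam]
  | succ m ih =>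
    rw [Path.extend_apply _ hs]
    change (if s ≤ 1 / 2 then _ else _) = _
    rw [powReparam]
    split_ifs with h
    · exact ih ⟨by linarith [hs.1], by linarith⟩
    · rfl

lemma trans_loopPow_apply (γ g : Path y y) (m : ℕ) (t : I) :
    γ.trans (loopPow g m) t =
      if (t : ℝ) ≤ 1 / 2 then γ.extend (2 * t) else g.extend (powReparam m (2 * t - 1)) := by
  change (if (t : ℝ) ≤ 1 / 2 then _ else _) = _
  split_ifs with h
  · rfl
  · exact loopPow_extend g ⟨by linarith, by linarith [t.2.2]⟩ m

end LoopPow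

section InfiniteConcatenation

variable {Y : Type*} [TopologicalSpace Y] {y : Y} (f : ℕ → Path y y)

def concatStep (a : ℕ × ℝ) : ℕ × ℝ := (a.1 + 1, powReparam (a.1 + 1) (2 * a.2 - 1))

/-- `infConcatFun f n` parametrises `f n · (f (n + 1) · (⋯) ^ (n + 2)) ^ (n + 1)`: a point of a
second half is followed into its position in the next level, until it lands in a first half;
points that never land are sent to `y`. -/
def infConcatFun (n : ℕ) (t : ℝ) : Y :=
  firstHitValue concatStep (fun a => a.2 ≤ 1 / 2) (fun a => (f a.1).extend (2 * a.2)) y (n, t)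

variable {f} {n : ℕ} {t : ℝ}

lemma infConcatFun_of_le (ht : t ≤ 1 / 2) : infConcatFun f n t = (f n).extend (2 * t) :=
  firstHitValue_of_pos ht

lemma infConcatFun_of_lt (ht : 1 / 2 < t) :
    infConcatFun f n t = infConcatFun f (n + 1) (powReparam (n + 1) (2 * t - 1)) :=
  firstHitValue_of_not (not_le.2 ht)

lemma concatStep_iterate_fst (a : ℕ × ℝ) (k : ℕ) : (concatStep^[k] a).1 = a.1 + k := by
  induction k with
  | zero => rfl
  | succ k ih => rw [Function.iterate_succ_apply', concatStep, ih, add_assoc]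

lemma concatStep_iterate_one (n k : ℕ) : concatStep^[k] (n, 1) = (n + k, 1) := by
  induction k with
  | zero => rfl
  | succ k ih =>
    rw [Function.iterate_succ_apply', ih, concatStep]
    norm_num [powReparam_succ_one]
    omega

lemma infConcatFun_one : infConcatFun f n 1 = y :=
  firstHitValue_mem (S := {y}) rfl fun k => by
    rw [concatStep_iterate_one]
    exact (f _).extend_of_one_le (by norm_num)

variable {V : ℕ → Set Y}

lemma infConcatFun_mem (hV : Antitone V) (hyV : ∀ k, y ∈ V k) (hf : ∀ k, range (f k) ⊆ V k)
    (n : ℕ) (t : ℝ) : infConcatFun f n t ∈ V n :=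
  firstHitValue_mem (hyV n) fun k =>
    hV (by simp [concatStep_iterate_fst]) (hf _ (Path.extend_range (f _) ▸ mem_range_self _))

variable (f) in
def infConcatTrunc : ℕ → ℕ → Path y y
  | 0, _ => Path.refl y
  | j + 1, n => (f n).trans (loopPow (infConcatTrunc j (n + 1)) (n + 1))

lemma infConcatFun_eq_or_mem (hV : Antitone V) (hyV : ∀ k, y ∈ V k)
    (hf : ∀ k, range (f k) ⊆ V k) (j n : ℕ) (t : I) :
    infConcatFun f n t = infConcatTrunc f j n t ∨
      infConcatFun f n t ∈ V (n + j) ∧ infConcatTrunc f j n t ∈ V (n + j) := by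
  induction j generalizing n t with
  | zero => exact .inr ⟨infConcatFun_mem hV hyV hf n t, hyV n⟩
  | succ j ih =>
    rw [infConcatTrunc, trans_loopPow_apply]
    split_ifs with ht
    · exact .inl (infConcatFun_of_le ht)
    · have hs := powReparam_mem (s := 2 * t - 1) ⟨by linarith, by linarith [t.2.2]⟩ (n + 1)
      rw [infConcatFun_of_lt (not_le.1 ht), Path.extend_apply _ hs, ← add_assoc, add_right_comm]
      exact ih (n + 1) ⟨_, hs⟩

lemma continuous_infConcatFun [T2Space Y] (hV : (𝓝 y).HasAntitoneBasis V)
    (hf : ∀ k, range (f k) ⊆ V k) (n : ℕ) : Continuous fun t : I => infConcatFun f n t := by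
  have hyV k : y ∈ V k := mem_of_mem_nhds (hV.mem k)
  refine continuous_of_forall_nhds_eq_or_mem (y := y) (fun j => (infConcatTrunc f j n).continuous)
    fun U hU => ?_
  obtain ⟨j, hj⟩ := hV.mem_iff.1 hU
  refine ⟨j, fun t => (infConcatFun_eq_or_mem hV.antitone hyV hf j n t).imp_right ?_⟩
  have hsub : V (n + j) ⊆ U := (hV.antitone (Nat.le_add_left j n)).trans hj
  exact And.imp (@hsub _) (@hsub _)

variable (f) in
def infConcat [T2Space Y] (hV : (𝓝 y).HasAntitoneBasis V) (hf : ∀ k, range (f k) ⊆ V k)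
    (n : ℕ) : Path y y where
  toFun t := infConcatFun f n t
  continuous_toFun := continuous_infConcatFun hV hf n
  source' := by simp [infConcatFun_of_le]
  target' := infConcatFun_one

lemma infConcat_eq_trans [T2Space Y] (hV : (𝓝 y).HasAntitoneBasis V)
    (hf : ∀ k, range (f k) ⊆ V k) (n : ℕ) :
    infConcat f hV hf n = (f n).trans (loopPow (infConcat f hV hf (n + 1)) (n + 1)) := by
  ext t
  rw [trans_loopPow_apply]
  split_ifs with ht
  · exact infConcatFun_of_le ht
  · have hs := powReparam_mem (s := 2 * t - 1) ⟨by linarith, by linarith [t.2.2]⟩ (n + 1)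
    rw [Path.extend_apply _ hs]
    exact infConcatFun_of_lt (not_le.1 ht)

end InfiniteConcatenation

section LoopClass

variable {Y : Type} [TopologicalSpace Y] {y : Y}

-- `π₁(Y, y)` is an automorphism group in the fundamental groupoid, so `a * b` is `b ≫ a`.
lemma loopClass_trans (u v : Path y y) : loopClass (u.trans v) = loopClass v * loopClass u :=
  rfl

lemma loopClass_loopPow (g : Path y y) (m : ℕ) : loopClass (loopPow g m) = loopClass g ^ m := by
  induction m with
  | zero => rfl
  | succ m ih =>
    rw [loopPow, loopClass_trans, ih]
    exact (pow_succ' _ _).symm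

lemma loopClass_surjective : Function.Surjective (loopClass (y := y)) :=
  fun g => Quotient.exists_rep (FundamentalGroup.toPath (X := TopCat.of Y) g)

end LoopClass

theorem cotorsion_of_small_loop_representatives_general
    (Y : Type) [TopologicalSpace Y] [T2Space Y]
    (y : Y) (hfc : (nhds y).IsCountablyGenerated)
    (A : Type) [CommGroup A] (h : FundamentalGroup Y y →* A)
    (hsurj : Function.Surjective h)
    (happrox : ∀ f : Path y y, ∃ F : ℕ → Path y y,
      (∀ n : ℕ, h (loopClass (F n)) = h (loopClass f)) ∧
      (∀ U ∈ nhds y, ∃ N : ℕ, ∀ n ≥ N, Set.range (F n) ⊆ U)) :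
    IsCotorsion (Additive A) := by
  obtain ⟨V, hV⟩ := (𝓝 y).exists_antitone_basis
  have small_rep (a : A) (n : ℕ) : ∃ f : Path y y, h (loopClass f) = a ∧ range f ⊆ V n := by
    obtain ⟨f, rfl⟩ := (hsurj.comp loopClass_surjective) a
    obtain ⟨F, hFclass, hFsmall⟩ := happrox f
    obtain ⟨N, hN⟩ := hFsmall (V n) (hV.mem n)
    exact ⟨F N, hFclass N, hN N le_rfl⟩
  refine isCotorsion_of_forall_exists_eq_add_succ_nsmul fun a => ?_
  choose f hfa hfV using fun n => small_rep (a n).toMul n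
  refine ⟨fun n => .ofMul (h (loopClass (infConcat f hV hfV n))), fun n => ?_⟩
  dsimp only
  rw [infConcat_eq_trans, loopClass_trans, loopClass_loopPow, map_mul, map_pow, hfa, mul_comm,
    ofMul_mul, ofMul_pow, ofMul_toMul]

/-- **Lemma 2.11** (with the corrected conclusion of Herfort–Hojka): if `Y` is a
path-connected Hausdorff space, first countable at `y`, `A` an abelian group, and
`h : π₁(Y,y) → A` a surjective homomorphism such that every loop `f` at `y` admits loops
`f_n` at `y` with `h([f_n]) = h([f])` whose images converge to `y`, then `A` is
cotorsion. -/
theorem cotorsion_of_small_loop_representatives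
    (Y : Type) [TopologicalSpace Y] [PathConnectedSpace Y] [T2Space Y]
    (y : Y) (hfc : (nhds y).IsCountablyGenerated)
    (A : Type) [CommGroup A] (h : FundamentalGroup Y y →* A)
    (hsurj : Function.Surjective h)
    (happrox : ∀ f : Path y y, ∃ F : ℕ → Path y y,
      (∀ n : ℕ, h (loopClass (F n)) = h (loopClass f)) ∧
      (∀ U ∈ nhds y, ∃ N : ℕ, ∀ n ≥ N, Set.range (F n) ⊆ U)) :
    IsCotorsion (Additive A) :=
  cotorsion_of_small_loop_representatives_general Y y hfc A h hsurj happrox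

end
end

section
/- Let 𝒢_ω = lim←(∗_{i<n} ℤ_i, p^m_n : n ≤ m) be the unrestricted free product, i.e., the inverse limit of the free products ∗_{i<n} ℤ_i of copies ℤ_i of ℤ along the canonical projections p^m_n : ∗_{i<m} ℤ_i → ∗_{i<n} ℤ_i (which kill the generators δ_i for n ≤ i < m). Then for every homomorphism h : 𝒢_ω → ℱ to a free group ℱ, there exist m ∈ ω and a homomorphism h̄ : ∗_{i<m} ℤ_i → ℱ such that h = h̄ ∘ p_m, where p_m : 𝒢_ω → ∗_{i<m} ℤ_i is the canonical projection. -/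
noncomputable section

/-- The canonical projection `p^m_n : ∗_{i<m} ℤ_i → ∗_{i<n} ℤ_i` (the free product of `m`
copies of `ℤ` is the free group on `m` generators), killing the generators `δ_i`, `n ≤ i < m`. -/
def freeProj (n m : ℕ) : FreeGroup (Fin m) →* FreeGroup (Fin n) :=
  FreeGroup.lift fun i => if h : (i : ℕ) < n then FreeGroup.of (⟨i, h⟩ : Fin n) else 1

/-- The unrestricted free product `𝒢_ω = lim← (∗_{i<n} ℤ_i, p^m_n)`, realized as the
subgroup of the product `Π n, ∗_{i<n} ℤ_i` of threads of the inverse system. -/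
def GOmega : Subgroup ((n : ℕ) → FreeGroup (Fin n)) where
  carrier := {g | ∀ (n m : ℕ), n ≤ m → freeProj n m (g m) = g n}
  one_mem' := by
    intro n m _
    simp only [Pi.one_apply, map_one]
  mul_mem' := by
    intro a b ha hb n m h
    simp only [Pi.mul_apply, map_mul, ha n m h, hb n m h]
  inv_mem' := by
    intro a ha n m h
    simp only [Pi.inv_apply, map_inv, ha n m h]

/-- The canonical projection `p_m : 𝒢_ω → ∗_{i<m} ℤ_i`. -/
def projG (m : ℕ) : GOmega →* FreeGroup (Fin m) :=
  (Pi.evalMonoidHom (fun n => FreeGroup (Fin n)) m).comp GOmega.subtype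

/-!
If `h` factored through no `p_m`, we could pick `x n ∈ ker p_n` with `h (x n) ≠ 1`. As `x n` is
trivial in all coordinates `j ≤ n`, the infinite nested powers `q n = (x n * q (n + 1)) ^ k n`
exist in `𝒢_ω` for any exponents `k`. In the free group, `c n = h (q n)` and `a n = h (x n)`
satisfy `c n = (a n * c (n + 1)) ^ k n`. Since `|y| ≤ |y ^ k|` and `k ≤ |y ^ k|` for `y ≠ 1`
(the cyclically reduced core of `y` is repeated `k` times), the lengths obey
`|c n| ≤ |c 0| + ∑_{i<n} |a i|`; exponents `k n` exceeding this bound force `a n * c (n + 1) = 1`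
for all large `n`, hence `a n = 1`.
-/

namespace FreeGroup

open reduceCyclically

variable {α : Type*} [DecidableEq α]

theorem norm_pow (x : FreeGroup α) {n : ℕ} (hn : n ≠ 0) :
    norm (x ^ n) =
      2 * (conjugator x.toWord).length + n * (reduceCyclically x.toWord).length := by
  simp [norm, toWord_pow, reduce_flatten_replicate isReduced_toWord, hn]
  ring

theorem reduceCyclically_toWord_ne_nil {x : FreeGroup α} (hx : x ≠ 1) :
    reduceCyclically x.toWord ≠ [] := by
  intro h
  apply hx
  have := congr_arg mk (conj_conjugator_reduceCyclically x.toWord)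
  rw [h, List.append_nil, ← mul_mk, ← inv_mk, mk_toWord, mul_inv_cancel] at this
  exact this.symm

theorem norm_le_norm_pow (x : FreeGroup α) {n : ℕ} (hn : n ≠ 0) : norm x ≤ norm (x ^ n) := by
  have h1 := norm_pow x one_ne_zero
  rw [pow_one] at h1
  rw [h1, norm_pow x hn]
  gcongr
  omega

theorem le_norm_pow {x : FreeGroup α} (hx : x ≠ 1) (n : ℕ) : n ≤ norm (x ^ n) := by
  rcases eq_or_ne n 0 with rfl | hn
  · exact Nat.zero_le _
  rw [norm_pow x hn]
  have := List.length_pos_iff.mpr (reduceCyclically_toWord_ne_nil hx)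
  nlinarith

theorem norm_le_of_nested_pow {a c : ℕ → FreeGroup α} {k : ℕ → ℕ} (hk : ∀ n, k n ≠ 0)
    (hc : ∀ n, c n = (a n * c (n + 1)) ^ k n) (n : ℕ) :
    norm (c n) ≤ norm (c 0) + ∑ i ∈ Finset.range n, norm (a i) := by
  induction n with
  | zero => simp
  | succ n ih =>
    have hstep : norm (c (n + 1)) ≤ norm (a n) + norm (c n) :=
      calc norm (c (n + 1)) = norm ((a n)⁻¹ * (a n * c (n + 1))) := by group
        _ ≤ norm (a n) + norm (a n * c (n + 1)) := by
          simpa only [norm_inv_eq] using norm_mul_le (a n)⁻¹ (a n * c (n + 1))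
        _ ≤ norm (a n) + norm (c n) := by
          rw [hc n]
          exact Nat.add_le_add_left (norm_le_norm_pow _ (hk n)) _
    rw [Finset.sum_range_succ]
    omega

theorem eq_one_of_nested_pow {a c : ℕ → FreeGroup α}
    (hc : ∀ n, c n = (a n * c (n + 1)) ^ (n + 1 + ∑ i ∈ Finset.range n, norm (a i)))
    {n : ℕ} (hn : norm (c 0) ≤ n) : a n = 1 := by
  have hbase : ∀ l, norm (c 0) ≤ l → a l * c (l + 1) = 1 := by
    intro l hl
    by_contra hne
    have hlow := le_norm_pow hne (l + 1 + ∑ i ∈ Finset.range l, norm (a i))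
    rw [← hc l] at hlow
    have hup := norm_le_of_nested_pow (fun _ => by omega) hc l
    omega
  have hc1 : c (n + 1) = 1 := by
    rw [hc, hbase (n + 1) (by omega), one_pow]
  simpa [hc1] using hbase n hn

end FreeGroup

theorem freeProj_of (n m : ℕ) (i : Fin m) :
    freeProj n m (FreeGroup.of i) = if h : (i : ℕ) < n then FreeGroup.of ⟨i, h⟩ else 1 :=
  FreeGroup.lift_apply_of

theorem freeProj_comp_freeProj {n k m : ℕ} (hnk : n ≤ k) :
    (freeProj n k).comp (freeProj k m) = freeProj n m := by
  refine FreeGroup.ext_hom _ _ fun i => ?_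
  rw [MonoidHom.comp_apply, freeProj_of, freeProj_of]
  by_cases hik : (i : ℕ) < k
  · rw [dif_pos hik, freeProj_of]
  · rw [dif_neg hik, dif_neg fun hin => hik (hin.trans_le hnk), map_one]

theorem freeProj_self (m : ℕ) : freeProj m m = MonoidHom.id _ :=
  FreeGroup.ext_hom _ _ fun i => by simp [freeProj_of]

/-- The thread `(p^m_n w)_n`, where for `n > m` the map `p^m_n` is the inclusion. -/
def embedG (m : ℕ) : FreeGroup (Fin m) →* GOmega :=
  (MonoidHom.pi fun n => freeProj n m).codRestrict GOmega
    fun w _ _ hnk => DFunLike.congr_fun (freeProj_comp_freeProj hnk) w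

theorem projG_comp_embedG (m : ℕ) : (projG m).comp (embedG m) = MonoidHom.id _ :=
  MonoidHom.ext fun w => DFunLike.congr_fun (freeProj_self m) w

theorem eq_comp_projG_of_ker_le {F : Type*} [Group F] (h : GOmega →* F) {m : ℕ}
    (hm : (projG m).ker ≤ h.ker) : h = (h.comp (embedG m)).comp (projG m) := by
  ext g : 1
  have hker : embedG m (projG m g) * g⁻¹ ∈ (projG m).ker := by
    rw [MonoidHom.mem_ker, map_mul, map_inv, ← MonoidHom.comp_apply, projG_comp_embedG,
      MonoidHom.id_apply, mul_inv_cancel]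
  have := h.mem_ker.mp (hm hker)
  rw [map_mul, map_inv, mul_inv_eq_one] at this
  exact this.symm

namespace GOmega

theorem apply_eq_one_of_projG_eq_one {g : GOmega} {m : ℕ} (hg : projG m g = 1) {j : ℕ}
    (hj : j ≤ m) : (g : ∀ n, FreeGroup (Fin n)) j = 1 := by
  rw [← g.2 j m hj, show (g : ∀ n, FreeGroup (Fin n)) m = 1 from hg, map_one]

/-- Coordinate `j` of `q n = (x n * (x (n + 1) * ⋯) ^ k (n + 1)) ^ k n`, truncated where the
factors `x i`, `i ≥ j`, have trivial coordinate `j`. -/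
def nestedPowCoord (x : ℕ → GOmega) (k : ℕ → ℕ) (j n : ℕ) : FreeGroup (Fin j) :=
  if n < j then ((x n : ∀ i, FreeGroup (Fin i)) j * nestedPowCoord x k j (n + 1)) ^ k n else 1
termination_by j - n

theorem nestedPowCoord_of_le (x : ℕ → GOmega) (k : ℕ → ℕ) {j n : ℕ} (h : j ≤ n) :
    nestedPowCoord x k j n = 1 := by
  rw [nestedPowCoord, if_neg (not_lt.mpr h)]

variable {x : ℕ → GOmega}

theorem nestedPowCoord_eq (hx : ∀ n, projG n (x n) = 1) (k : ℕ → ℕ) (j n : ℕ) :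
    nestedPowCoord x k j n =
      ((x n : ∀ i, FreeGroup (Fin i)) j * nestedPowCoord x k j (n + 1)) ^ k n := by
  rw [nestedPowCoord]
  split_ifs with hnj
  · rfl
  · rw [nestedPowCoord_of_le x k (by omega),
      apply_eq_one_of_projG_eq_one (hx n) (not_lt.mp hnj), one_mul, one_pow]

theorem freeProj_nestedPowCoord (hx : ∀ n, projG n (x n) = 1) (k : ℕ → ℕ) {i j : ℕ}
    (hij : i ≤ j) (n : ℕ) :
    freeProj i j (nestedPowCoord x k j n) = nestedPowCoord x k i n := by
  by_cases hjn : j ≤ n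
  · rw [nestedPowCoord_of_le x k hjn, nestedPowCoord_of_le x k (hij.trans hjn), map_one]
  · rw [nestedPowCoord_eq hx k j, nestedPowCoord_eq hx k i, map_pow, map_mul, (x n).2 i j hij,
      freeProj_nestedPowCoord hx k hij (n + 1)]
termination_by j - n

theorem exists_nested_pow (hx : ∀ n, projG n (x n) = 1) (k : ℕ → ℕ) :
    ∃ q : ℕ → GOmega, ∀ n, q n = (x n * q (n + 1)) ^ k n :=
  ⟨fun n => ⟨fun j => nestedPowCoord x k j n, fun _ _ hij => freeProj_nestedPowCoord hx k hij n⟩,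
    fun n => Subtype.ext (funext fun j => nestedPowCoord_eq hx k j n)⟩

end GOmega

theorem exists_ker_projG_le_ker {β : Type*} [DecidableEq β] (h : GOmega →* FreeGroup β) :
    ∃ m, (projG m).ker ≤ h.ker := by
  by_contra! hnot
  choose x hx hhx using fun m => SetLike.not_le_iff_exists.mp (hnot m)
  obtain ⟨q, hq⟩ := GOmega.exists_nested_pow hx
    fun n => n + 1 + ∑ i ∈ Finset.range n, FreeGroup.norm (h (x i))
  have hc : ∀ n, h (q n) = (h (x n) * h (q (n + 1))) ^
      (n + 1 + ∑ i ∈ Finset.range n, FreeGroup.norm (h (x i))) := fun n => by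
    rw [hq n, map_pow, map_mul]
  exact hhx _ (FreeGroup.eq_one_of_nested_pow hc le_rfl)

/-- **Lemma 3.2** (Higman; [Scott, Theorem 1]): every homomorphism from the unrestricted
free product `𝒢_ω` to a free group factors through one of the canonical projections
`p_m : 𝒢_ω → ∗_{i<m} ℤ_i`. -/
theorem hom_from_GOmega_factors (F : Type) [Group F] [IsFreeGroup F]
    (h : GOmega →* F) :
    ∃ (m : ℕ) (hbar : FreeGroup (Fin m) →* F), h = hbar.comp (projG m) := by
  classical
  obtain ⟨m, hm⟩ := exists_ker_projG_le_ker
    ((IsFreeGroup.toFreeGroup F : F →* FreeGroup (IsFreeGroup.Generators F)).comp h)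
  rw [MonoidHom.ker_mulEquiv_comp] at hm
  exact ⟨m, _, eq_comp_projG_of_ker_le h hm⟩

end
end
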